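/- arXiv:1406.6623 — 2 statements merged into one kernel-verified Lean document; each statement's English description precedes it below -/
import Mathlib

section
/- If S₁ and S₂ are disjoint compact subsets of a metric space and S = S₁ ∪ S₂, then dim_tC S = max{ dim_tC S₁, dim_tC S₂ }. -/
open Metric Set Topology
open scoped ENNReal NNReal

noncomputable section

/-- Hausdorff dimension of a set, with the convention that the empty set has dimension `-1`. -/
def hdim {X : Type*} [EMetricSpace X] (s : Set X) : EReal :=
  open scoped Classical in
  if s.Nonempty then ((dimH s : ℝ≥0∞) : EReal) else -1

/-- Hausdorff dimension of a metric space. -/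
def hdimSpace (X : Type*) [EMetricSpace X] : EReal :=
  hdim (Set.univ : Set X)

/-- A quasisymmetric embedding between metric spaces: a topological embedding `f` together with
a homeomorphism `η` of `[0,∞)` such that `d(x,a) ≤ t·d(x,b)` implies
`d(f x, f a) ≤ η t · d(f x, f b)`. -/
def IsQuasisymmetric {X Y : Type*} [MetricSpace X] [MetricSpace Y] (f : X → Y) : Prop :=
  Topology.IsEmbedding f ∧ ∃ η : ℝ≥0 ≃ₜ ℝ≥0, ∀ (x a b : X) (t : ℝ≥0), 0 < t →
    dist x a ≤ (t : ℝ) * dist x b → dist (f x) (f a) ≤ (η t : ℝ) * dist (f x) (f b)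

/-- Conformal dimension: infimum of Hausdorff dimensions of quasisymmetric images. -/
def conformalDim (X : Type u) [MetricSpace X] : EReal :=
  sInf { c : EReal | ∃ (Y : Type u) (_ : MetricSpace Y) (f : X → Y),
    IsQuasisymmetric f ∧ c = hdim (Set.range f) }

/-- Topological conformal dimension. -/
def tcDim (X : Type u) [MetricSpace X] : EReal :=
  sInf { c : EReal | ∃ 𝒰 : Set (Set X), TopologicalSpace.IsTopologicalBasis 𝒰 ∧
    ∀ U ∈ 𝒰, conformalDim ↥(frontier U) ≤ c - 1 }

/-- Topological Hausdorff dimension. -/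
def thDim (X : Type*) [MetricSpace X] : EReal :=
  sInf { c : EReal | ∃ 𝒰 : Set (Set X), TopologicalSpace.IsTopologicalBasis 𝒰 ∧
    ∀ U ∈ 𝒰, hdim (frontier U) ≤ c - 1 }

end



/-!
Conformal dimension does not increase under isometric embeddings, and restricting a basis to a
subspace only shrinks frontiers; hence `dim_tC Sᵢ ≤ dim_tC S`. Conversely, `S₁` and `S₂` are
clopen in `S = S₁ ∪ S₂`, so the union of bases of `S₁` and `S₂` is a basis of `S` whose members
have the same frontiers as in the pieces, which gives `dim_tC S ≤ max (dim_tC S₁) (dim_tC S₂)`.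
-/

open TopologicalSpace

theorem hdim_mono {Z : Type*} [EMetricSpace Z] {s t : Set Z} (h : s ⊆ t) : hdim s ≤ hdim t := by
  unfold hdim
  split_ifs with hs ht ht
  · exact EReal.coe_ennreal_le_coe_ennreal_iff.2 (dimH_mono h)
  · exact absurd (hs.mono h) ht
  · exact (show (-1 : EReal) ≤ 0 by norm_num).trans (EReal.coe_ennreal_nonneg _)
  · exact le_rfl

theorem Topology.IsClosedEmbedding.frontier_image_subset {A B : Type*} [TopologicalSpace A]
    [TopologicalSpace B] {f : A → B} (hf : IsClosedEmbedding f) (hf' : IsOpenMap f) (s : Set A) :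
    frontier (f '' s) ⊆ f '' frontier s := by
  rw [frontier, frontier, hf.closure_image_eq, image_sdiff hf.injective]
  exact sdiff_subset_sdiff_right (hf'.image_interior_subset s)

section Isometry

variable {A B : Type u} [MetricSpace A] [MetricSpace B] {f : A → B}

theorem Isometry.conformalDim_le (hf : Isometry f) : conformalDim A ≤ conformalDim B := by
  refine le_sInf ?_
  rintro _ ⟨Y, _, g, ⟨hg, η, hη⟩, rfl⟩
  refine le_trans (sInf_le ⟨Y, ‹_›, g ∘ f, ⟨hg.comp hf.isEmbedding, η, ?_⟩, rfl⟩)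
    (hdim_mono (range_comp_subset_range f g))
  intro x a b t ht hle
  exact hη (f x) (f a) (f b) t ht (by rwa [hf.dist_eq, hf.dist_eq])

theorem Isometry.conformalDim_le_of_mapsTo (hf : Isometry f) {s : Set A} {t : Set B}
    (h : MapsTo f s t) : conformalDim s ≤ conformalDim t :=
  Isometry.conformalDim_le (f := h.restrict f s t) fun x y => hf x y

theorem Isometry.conformalDim_le_of_subset_image (hf : Isometry f) {s : Set A} {t : Set B}
    (h : t ⊆ f '' s) : conformalDim t ≤ conformalDim s := by
  choose g hgs hfg using fun y : t => h y.2
  refine Isometry.conformalDim_le (f := fun y => (⟨g y, hgs y⟩ : s)) fun y z => ?_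
  change edist (g y) (g z) = edist (y : B) z
  rw [← hf.edist_eq, hfg, hfg]

theorem Isometry.tcDim_le (hf : Isometry f) : tcDim A ≤ tcDim B := by
  refine le_sInf ?_
  rintro c ⟨𝒰, h𝒰, hfr⟩
  refine sInf_le ⟨preimage f '' 𝒰, h𝒰.isInducing hf.isEmbedding.isInducing, ?_⟩
  rintro _ ⟨U, hU, rfl⟩
  exact (hf.conformalDim_le_of_mapsTo (hf.continuous.frontier_preimage_subset U)).trans (hfr U hU)

end Isometry

section TopologicalConformalDimension

variable {Y : Type u} [MetricSpace Y]

theorem tcDim_le_of_isTopologicalBasis {𝒰 : Set (Set Y)} (h𝒰 : IsTopologicalBasis 𝒰) {c : EReal}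
    (hc : ∀ U ∈ 𝒰, conformalDim (frontier U) ≤ c - 1) : tcDim Y ≤ c :=
  sInf_le ⟨𝒰, h𝒰, hc⟩

theorem exists_isTopologicalBasis_of_tcDim_lt {c : EReal} (h : tcDim Y < c) :
    ∃ 𝒰 : Set (Set Y), IsTopologicalBasis 𝒰 ∧ ∀ U ∈ 𝒰, conformalDim (frontier U) ≤ c - 1 := by
  obtain ⟨c', ⟨𝒰, h𝒰, hc'⟩, hc'c⟩ := sInf_lt_iff.1 h
  exact ⟨𝒰, h𝒰, fun U hU => (hc' U hU).trans (EReal.sub_le_sub hc'c.le le_rfl)⟩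

theorem tcDim_le_iSup_of_isClopen_cover {ι : Type*} {U : ι → Set Y} (hU : ∀ i, IsClopen (U i))
    (hcover : ⋃ i, U i = univ) : tcDim Y ≤ ⨆ i, tcDim (U i) := by
  refine le_of_forall_gt_imp_ge_of_dense fun c hc => ?_
  choose 𝒰 h𝒰 hfr using fun i =>
    exists_isTopologicalBasis_of_tcDim_lt ((le_iSup (fun i => tcDim (U i)) i).trans_lt hc)
  refine tcDim_le_of_isTopologicalBasis
    (isTopologicalBasis_of_cover (fun i => (hU i).isOpen) hcover h𝒰) ?_
  simp only [mem_iUnion, mem_image]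
  rintro _ ⟨i, V, hV, rfl⟩
  have hfrontier := (hU i).isClosed.isClosedEmbedding_subtypeVal.frontier_image_subset
    (hU i).isOpen.isOpenMap_subtype_val V
  exact (isometry_subtype_coe.conformalDim_le_of_subset_image hfrontier).trans (hfr i V hV)

theorem tcDim_le_max_of_isClosed {s t : Set Y} (hs : IsClosed s) (ht : IsClosed t)
    (hst : Disjoint s t) (hcover : s ∪ t = univ) : tcDim Y ≤ max (tcDim s) (tcDim t) := by
  have hcompl : IsCompl s t := ⟨hst, codisjoint_iff.2 hcover⟩
  have hs' : IsClopen s := ⟨hs, hcompl.symm.compl_eq ▸ ht.isOpen_compl⟩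
  have hU : ∀ b, IsClopen (cond b s t) := by
    rintro (_ | _)
    exacts [hcompl.compl_eq ▸ hs'.compl, hs']
  simpa only [iSup_bool_eq, cond_true, cond_false] using
    tcDim_le_iSup_of_isClopen_cover hU (union_eq_iUnion.symm.trans hcover)

end TopologicalConformalDimension

theorem tcDim_union_of_isClosed {X : Type u} [MetricSpace X] {S₁ S₂ : Set X} (h₁ : IsClosed S₁)
    (h₂ : IsClosed S₂) (hdisj : Disjoint S₁ S₂) :
    tcDim ↥(S₁ ∪ S₂) = max (tcDim ↥S₁) (tcDim ↥S₂) := by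
  refine le_antisymm ?_ (max_le
    (Isometry.tcDim_le (f := inclusion subset_union_left) fun _ _ => rfl)
    (Isometry.tcDim_le (f := inclusion subset_union_right) fun _ _ => rfl))
  have hpieces := tcDim_le_max_of_isClosed (h₁.preimage continuous_subtype_val)
    (h₂.preimage continuous_subtype_val) (hdisj.preimage ((↑) : ↥(S₁ ∪ S₂) → X))
    (eq_univ_of_forall Subtype.prop)
  exact hpieces.trans (max_le_max
    (Isometry.tcDim_le (f := fun x => (⟨x.1, x.2⟩ : ↥S₁)) fun _ _ => rfl)
    (Isometry.tcDim_le (f := fun x => (⟨x.1, x.2⟩ : ↥S₂)) fun _ _ => rfl))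

/-- If `S₁, S₂` are disjoint compact subsets of a metric space and `S = S₁ ∪ S₂`, then
`dim_tC S = max (dim_tC S₁) (dim_tC S₂)`. -/
theorem stmt5 {X : Type u} [MetricSpace X] (S₁ S₂ : Set X)
    (h₁ : IsCompact S₁) (h₂ : IsCompact S₂) (hdisj : Disjoint S₁ S₂) :
    tcDim ↥(S₁ ∪ S₂) = max (tcDim ↥S₁) (tcDim ↥S₂) :=
  tcDim_union_of_isClosed h₁.isClosed h₂.isClosed hdisj
end

section
/- If a metric space K is homeomorphic to [0,1], then dim_tC K = 1. -/
open Metric Set Topology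
open scoped ENNReal NNReal

/-
A space homeomorphic to `[0,1]` embeds in `ℝ`, so the preimages of open intervals form a basis
whose frontiers have at most two points; a countable space has conformal dimension at most `0`,
which gives `dim_tC K ≤ 1`. Conversely `K` is connected and has two points, so every basis
contains a set that is neither empty nor everything; its frontier is nonempty and has conformal
dimension at least `0`, which gives `dim_tC K ≥ 1`.
-/

lemma isQuasisymmetric_id {X : Type*} [MetricSpace X] : IsQuasisymmetric (id : X → X) :=
  ⟨.id, Homeomorph.refl ℝ≥0, fun _ _ _ _ _ h => h⟩

lemma conformalDim_le_hdimSpace (X : Type u) [MetricSpace X] :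
    conformalDim X ≤ hdimSpace X :=
  sInf_le ⟨X, inferInstance, id, isQuasisymmetric_id, by simp [hdimSpace]⟩

lemma hdimSpace_nonpos_of_countable (X : Type*) [MetricSpace X] [Countable X] :
    hdimSpace X ≤ 0 := by
  rw [hdimSpace, hdim]
  split_ifs
  · simp [dimH_countable Set.countable_univ]
  · exact EReal.coe_le_coe_iff.mpr (by norm_num : (-1 : ℝ) ≤ 0)

lemma conformalDim_nonpos_of_countable (X : Type u) [MetricSpace X] [Countable X] :
    conformalDim X ≤ 0 :=
  (conformalDim_le_hdimSpace X).trans (hdimSpace_nonpos_of_countable X)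

lemma conformalDim_nonneg (X : Type u) [MetricSpace X] [Nonempty X] :
    0 ≤ conformalDim X := by
  refine le_sInf ?_
  rintro c ⟨Y, _, f, -, rfl⟩
  rw [hdim, if_pos (Set.range_nonempty f)]
  exact EReal.coe_ennreal_nonneg _

lemma tcDim_le_one_of_isTopologicalBasis {X : Type u} [MetricSpace X] {𝒰 : Set (Set X)}
    (h𝒰 : TopologicalSpace.IsTopologicalBasis 𝒰) (hfr : ∀ U ∈ 𝒰, (frontier U).Countable) :
    tcDim X ≤ 1 := by
  refine sInf_le ⟨𝒰, h𝒰, fun U hU => ?_⟩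
  have : Countable (frontier U) := (hfr U hU).to_subtype
  rw [EReal.sub_self (x := 1) (EReal.coe_ne_top 1) (EReal.coe_ne_bot 1)]
  exact conformalDim_nonpos_of_countable _

lemma one_le_tcDim {X : Type u} [MetricSpace X] [ConnectedSpace X] [Nontrivial X] :
    1 ≤ tcDim X := by
  refine le_sInf ?_
  rintro c ⟨𝒰, h𝒰, hfr⟩
  obtain ⟨x, y, hxy⟩ := exists_pair_ne X
  obtain ⟨U, hU𝒰, hxU, hUy⟩ :=
    h𝒰.exists_subset_of_mem_open (Set.mem_compl_singleton_iff.mpr hxy) isOpen_compl_singleton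
  have hfrontier : (frontier U).Nonempty :=
    nonempty_frontier_iff.mpr ⟨⟨x, hxU⟩, fun hU => hUy (hU ▸ Set.mem_univ y) rfl⟩
  have : Nonempty (frontier U) := hfrontier.to_subtype
  have hc : 0 ≤ c - 1 := (conformalDim_nonneg _).trans (hfr U hU𝒰)
  exact (EReal.sub_nonneg (.inr (EReal.coe_ne_top 1)) (.inr (EReal.coe_ne_bot 1))).mp hc

lemma countable_frontier_preimage_Ioo {X : Type*} [TopologicalSpace X] {g : X → ℝ}
    (hg : Topology.IsEmbedding g) (a b : ℝ) : (frontier (g ⁻¹' Set.Ioo a b)).Countable := by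
  refine ((Set.toFinite {a, b}).preimage hg.injective.injOn).countable.mono ?_
  refine (hg.continuous.frontier_preimage_subset _).trans (Set.preimage_mono ?_)
  rcases lt_or_ge a b with hab | hab
  · rw [frontier_Ioo hab]
  · simp [Set.Ioo_eq_empty (not_lt.mpr hab)]

lemma isTopologicalBasis_preimage_Ioo {X : Type*} [TopologicalSpace X] {g : X → ℝ}
    (hg : Topology.IsEmbedding g) :
    TopologicalSpace.IsTopologicalBasis {U | ∃ a b : ℝ, U = g ⁻¹' Set.Ioo a b} := by
  refine (Real.isTopologicalBasis_Ioo_rat.isInducing hg.isInducing).of_isOpen_of_subset ?_ ?_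
  · rintro U ⟨a, b, rfl⟩
    exact isOpen_Ioo.preimage hg.continuous
  · rintro U ⟨V, hV, rfl⟩
    simp only [Set.mem_iUnion, Set.mem_singleton_iff] at hV
    obtain ⟨a, b, -, rfl⟩ := hV
    exact ⟨a, b, rfl⟩

lemma tcDim_le_one_of_isEmbedding_real {X : Type u} [MetricSpace X] {g : X → ℝ}
    (hg : Topology.IsEmbedding g) : tcDim X ≤ 1 :=
  tcDim_le_one_of_isTopologicalBasis (isTopologicalBasis_preimage_Ioo hg) <| by
    rintro U ⟨a, b, rfl⟩
    exact countable_frontier_preimage_Ioo hg a b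

/-- If `K` is homeomorphic to `[0,1]`, then `dim_tC K = 1`. -/
theorem stmt16 {K : Type u} [MetricSpace K] (h : Nonempty (K ≃ₜ unitInterval)) :
    tcDim K = 1 := by
  obtain ⟨e⟩ := h
  have : ConnectedSpace K := e.symm.surjective.connectedSpace e.symm.continuous
  have : Nontrivial K := e.surjective.nontrivial
  exact le_antisymm
    (tcDim_le_one_of_isEmbedding_real (Topology.IsEmbedding.subtypeVal.comp e.isEmbedding))
    one_le_tcDim
end
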